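/- Let S be a numerical semigroup admitting a monic pattern p of length n with admissibility degree at least 3, and let E be a semigroup ideal of S. Then p'(S) ⊆ E−E if and only if S ⋈ᵈ E admits p eventually with respect to d, where p'(S) = {p'(s₁,…,s_{n−1}) : s₁,…,s_{n−1} ∈ S, s₁ ≥ ⋯ ≥ s_{n−1}}. -/
import Mathlib


/-- A numerical semigroup: an additive submonoid of ℕ with finite complement. -/
def IsNumericalSemigroup (S : Set ℕ) : Prop :=
  0 ∈ S ∧ (∀ a ∈ S, ∀ b ∈ S, a + b ∈ S) ∧ Sᶜ.Finite

/-- Evaluation of a pattern (list of coefficients a₁,…,aₙ) at s₁,…,sₙ. -/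
def patEval (p : List ℤ) (s : ℕ → ℕ) : ℤ :=
  ∑ i ∈ Finset.range p.length, p.getD i 0 * (s i : ℤ)

/-- `S` admits the pattern `p`: p(s₁,…,sₙ) ∈ S for all s₁ ≥ ⋯ ≥ sₙ in S. -/
def AdmitsPat (S : Set ℕ) (p : List ℤ) : Prop :=
  ∀ s : ℕ → ℕ, (∀ i, s i ∈ S) → (∀ i j, i ≤ j → s j ≤ s i) →
    ∃ m ∈ S, (m : ℤ) = patEval p s

/-- A pattern is admissible if it is admitted by some numerical semigroup. -/
def Admissible (p : List ℤ) : Prop :=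
  ∃ S : Set ℕ, IsNumericalSemigroup S ∧ AdmitsPat S p

/-- The derivative p' of a pattern. -/
def pderiv : List ℤ → List ℤ
  | [] => []
  | a :: q => if a = 1 then q else (a - 1) :: q

/-- The admissibility degree: least k such that p⁽ᵏ⁾ is not admissible, or ∞. -/
noncomputable def adDeg (p : List ℤ) : ℕ∞ :=
  sInf ((fun m : ℕ => (m : ℕ∞)) '' {m : ℕ | ¬ Admissible (pderiv^[m] p)})

/-- The partial sum bᵢ = a₁ + ⋯ + aᵢ of the coefficients of `p`. -/
def psum (p : List ℤ) (i : ℕ) : ℤ :=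
  ∑ j ∈ Finset.range i, p.getD j 0

/-- The numerical duplication S ⋈ᵈ E = 2·S ∪ (2·E + d). -/
def numDup (S E : Set ℕ) (d : ℕ) : Set ℕ :=
  {x | ∃ s ∈ S, x = 2 * s} ∪ {x | ∃ e ∈ E, x = 2 * e + d}

/-- S ⋈ᵈ E admits p eventually with respect to d. -/
def EventuallyAdmits (S E : Set ℕ) (p : List ℤ) : Prop :=
  ∃ d' : ℕ, ∀ d : ℕ, d ∈ S → Odd d → d' ≤ d → AdmitsPat (numDup S E d) p

/-- The relative ideal E − E = {z ∈ ℤ : z + E ⊆ E}. -/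
def EmE (E : Set ℕ) : Set ℤ :=
  {z : ℤ | ∀ e ∈ E, ∃ f ∈ E, (f : ℤ) = z + (e : ℤ)}

/-- The conductor c(E) = min{x ∈ ℕ : x + ℕ ⊆ E}. -/
noncomputable def condOf (E : Set ℕ) : ℕ :=
  sInf {c : ℕ | ∀ x : ℕ, c ≤ x → x ∈ E}

lemma patEval_cons (a : ℤ) (r : List ℤ) (t : ℕ → ℕ) :
    patEval (a :: r) t = a * t 0 + patEval r (fun i => t (i+1)) := by
  unfold patEval
  rw [List.length_cons, Finset.sum_range_succ']
  simp [add_comm]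

lemma psum_cons (a : ℤ) (r : List ℤ) (i : ℕ) :
    psum (a :: r) (i+1) = a + psum r i := by
  unfold psum
  rw [Finset.sum_range_succ']
  simp [add_comm]

lemma patEval_two_mul (q : List ℤ) (s : ℕ → ℕ) :
    patEval q (fun i => 2 * s i) = 2 * patEval q s := by
  unfold patEval
  rw [Finset.mul_sum]
  exact Finset.sum_congr rfl fun i _ => by push_cast; ring

lemma psum_stable (q : List ℤ) (i : ℕ) (h : q.length ≤ i) :
    psum q i = psum q q.length := by
  unfold psum
  refine (Finset.sum_subset (Finset.range_subset_range.mpr h) ?_).symm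
  intro x _ hx
  exact List.getD_eq_default _ _ (by simpa using hx)

lemma psum_nonneg (q : List ℤ) (h : Admissible q) (i : ℕ) : 0 ≤ psum q i := by
  obtain ⟨S, ⟨h0, hadd, hfin⟩, hadm⟩ := h
  obtain ⟨B, hB⟩ := hfin.bddAbove
  have hBS : B + 1 ∈ S := by
    by_contra hc
    exact absurd (hB hc) (by omega)
  -- reduce to i ≤ q.length
  rcases le_or_gt i q.length with hi | hi
  · set s : ℕ → ℕ := fun j => if j < i then B + 1 else 0 with hs
    obtain ⟨m, hmS, hmeq⟩ := hadm s
      (fun j => by by_cases hj : j < i <;> simp [hs, hj, h0, hBS])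
      (fun j k hjk => by
        by_cases hk : k < i <;> by_cases hj : j < i <;> simp [hs, hk, hj] <;> omega)
    have hcalc : patEval q s = psum q i * (B + 1) := by
      unfold patEval psum
      rw [Finset.sum_mul]
      rw [show Finset.range i = (Finset.range q.length).filter (· < i) from by
        ext x; simp; omega]
      rw [Finset.sum_filter]
      refine Finset.sum_congr rfl fun j _ => ?_
      by_cases hj : j < i <;> simp [hs, hj]
    rw [hcalc] at hmeq
    nlinarith [Int.natCast_nonneg m, hmeq]
  · rw [psum_stable q i hi.le]
    rcases le_or_gt 0 (psum q q.length) with h | h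
    · exact h
    · exfalso
      -- same argument with i = q.length; do a mini induction-free trick:
      set s : ℕ → ℕ := fun _ => B + 1 with hs
      obtain ⟨m, hmS, hmeq⟩ := hadm s (fun _ => hBS) (fun _ _ _ => le_refl _)
      have hcalc : patEval q s = psum q q.length * (B + 1) := by
        unfold patEval psum
        rw [Finset.sum_mul]
        refine Finset.sum_congr rfl fun j _ => ?_
        push_cast [hs]
        ring
      nlinarith [Int.natCast_nonneg m, hmeq]

lemma patEval_ge_mul (q : List ℤ) (c : ℤ) (t : ℕ → ℕ)
    (hq : ∀ i, 1 ≤ i → i ≤ q.length → c ≤ psum q i)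
    (hne : q ≠ [])
    (hdec : ∀ i j, i ≤ j → t j ≤ t i) :
    c * (t 0) ≤ patEval q t := by
  induction q generalizing c t with
  | nil => exact absurd rfl hne
  | cons a r ih =>
    rw [patEval_cons]
    have hac : c ≤ a := by
      have := hq 1 le_rfl (by simp)
      have h1 : psum (a :: r) 1 = a := by
        have := psum_cons a r 0
        simpa [psum] using this
      rw [h1] at this
      exact this
    rcases eq_or_ne r [] with rfl | hr
    · have : patEval ([] : List ℤ) (fun i => t (i+1)) = 0 := by simp [patEval]
      rw [this]
      nlinarith [Int.natCast_nonneg (t 0)]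
    · have h2 := ih (c - a) (fun i => t (i+1))
        (fun i h1 hlen => by
          have := hq (i+1) (by omega) (by simp; omega)
          rw [psum_cons] at this
          omega)
        hr (fun i j hij => hdec _ _ (by omega))
    -- c * t0 ≤ a * t0 + patEval r t'
      have ht : (t 1 : ℤ) ≤ t 0 := by exact_mod_cast hdec 0 1 (by norm_num)
      have hnn : (0:ℤ) ≤ (a - c) * (t 0 - t 1) :=
        mul_nonneg (by omega) (by omega)
      nlinarith [h2]

/-- Let p be a monic pattern of admissibility degree at least 3 admitted by S.
Then p'(S) ⊆ E − E iff S ⋈ᵈ E admits p eventually with respect to d, where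
p'(S) is the set of values of p' at weakly decreasing tuples from S. -/
theorem stmt_19 (S E : Set ℕ) (hS : IsNumericalSemigroup S)
    (hES : E ⊆ S) (hE : ∀ e ∈ E, ∀ s ∈ S, e + s ∈ E) (hEne : E.Nonempty)
    (p : List ℤ) (hp : ∀ a ∈ p, a ≠ 0)
    (hmonic : p.getD 0 0 = 1) (hdeg : 3 ≤ adDeg p)
    (hSp : AdmitsPat S p) :
    (∀ s : ℕ → ℕ, (∀ i, s i ∈ S) → (∀ i j, i ≤ j → s j ≤ s i) →
        patEval (pderiv p) s ∈ EmE E) ↔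
      EventuallyAdmits S E p := by
  -- basic setup
  obtain ⟨B, hB⟩ := hS.2.2.bddAbove
  have hSbig : ∀ x : ℕ, B + 1 ≤ x → x ∈ S := by
    intro x hx
    by_contra hc
    exact absurd (hB hc) (by omega)
  obtain ⟨e₀, he₀⟩ := hEne
  set C : ℕ := e₀ + B + 1 with hCdef
  have hC : ∀ x : ℕ, C ≤ x → x ∈ E := by
    intro x hx
    have hxe : x = e₀ + (x - e₀) := by omega
    rw [hxe]
    exact hE e₀ he₀ _ (hSbig _ (by omega))
  -- destructure p
  have hpne : p ≠ [] := by
    intro h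
    rw [h] at hmonic
    simp at hmonic
  obtain ⟨a, q, rfl⟩ := List.exists_cons_of_ne_nil hpne
  have ha : a = 1 := by simpa using hmonic
  subst ha
  have hpd : pderiv (1 :: q) = q := by simp [pderiv]
  -- admissibility facts
  have hadm : ∀ m : ℕ, m < 3 → Admissible (pderiv^[m] (1 :: q)) := by
    intro m hm
    by_contra hc
    have hle : adDeg (1 :: q) ≤ (m : ℕ∞) := sInf_le ⟨m, hc, rfl⟩
    have := hdeg.trans hle
    have : (3 : ℕ) ≤ m := by exact_mod_cast this
    omega
  constructor
  · -- forward: p'(S) ⊆ E−E implies eventually admits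
    intro Hlhs
    refine ⟨2 * C + 1, ?_⟩
    intro d hdS hdodd hdge
    intro t htD htdec
    rcases q with _ | ⟨b, r⟩
    · -- p = [1]
      refine ⟨t 0, htD 0, ?_⟩
      simp [patEval]
    -- p = 1 :: b :: r, n ≥ 2
    have hA2 : Admissible (pderiv (b :: r)) := by
      have h2 : pderiv^[2] (1 :: b :: r) = pderiv (pderiv (1 :: b :: r)) := rfl
      have := hadm 2 (by norm_num)
      rw [h2, hpd] at this
      exact this
    have hb2 : ∀ j : ℕ, 2 ≤ j → 2 ≤ psum (1 :: b :: r) j := by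
      intro j hj
      obtain ⟨i, rfl⟩ : ∃ i, j = i + 2 := ⟨j - 2, by omega⟩
      rw [show i + 2 = (i + 1) + 1 from rfl, psum_cons, psum_cons]
      by_cases hb : b = 1
      · subst hb
        have hAr : Admissible r := by simpa [pderiv] using hA2
        have := psum_nonneg r hAr i
        omega
      · have hAr : Admissible ((b - 1) :: r) := by simpa [pderiv, hb] using hA2
        have := psum_nonneg ((b - 1) :: r) hAr (i + 1)
        rw [psum_cons] at this
        omega
    have htail : ∀ i : ℕ, 1 ≤ i → i ≤ (b :: r).length → 1 ≤ psum (b :: r) i := by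
      intro i h1 _
      have := hb2 (i + 1) (by omega)
      rw [psum_cons] at this
      omega
    -- decompose t
    have hdecomp : ∀ i, ∃ (u : ℕ) (ε : Bool),
        (ε = true → u ∈ E ∧ t i = 2 * u + d) ∧ (ε = false → u ∈ S ∧ t i = 2 * u) := by
      intro i
      rcases htD i with ⟨s', hs', h⟩ | ⟨e', he', h⟩
      · exact ⟨s', false, by simp, fun _ => ⟨hs', h⟩⟩
      · exact ⟨e', true, fun _ => ⟨he', h⟩, by simp⟩
    choose u ε hε1 hε0 using hdecomp
    set L : ℕ := r.length + 1 with hLdef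
    by_cases hO : ∃ i, 1 ≤ i ∧ i ≤ L ∧ ε i = true
    · -- mixed / large case: conductor argument
      obtain ⟨i₀, hi1, hi2, hi3⟩ := hO
      have hti₀ : d ≤ t i₀ := by
        rw [(hε1 i₀ hi3).2]; omega
      have ht1 : d ≤ t 1 := le_trans hti₀ (htdec 1 i₀ hi1)
      have ht0 : d ≤ t 0 := le_trans ht1 (htdec 0 1 (by norm_num))
      have habel : (t 1 : ℤ) ≤ patEval (b :: r) (fun i => t (i + 1)) := by
        have := patEval_ge_mul (b :: r) 1 (fun i => t (i + 1)) htail (by simp)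
          (fun i j hij => htdec _ _ (by omega))
        simpa using this
      have hV : (t 0 : ℤ) + (t 1 : ℤ) ≤ patEval (1 :: b :: r) t := by
        rw [patEval_cons]
        linarith
      have hV0 : (0 : ℤ) ≤ patEval (1 :: b :: r) t := le_trans (by positivity) hV
      set M : ℕ := (patEval (1 :: b :: r) t).toNat with hMdef
      have hM : (M : ℤ) = patEval (1 :: b :: r) t := Int.toNat_of_nonneg hV0
      have hM2d : 2 * d ≤ M := by
        have h1 : ((2 * d : ℕ) : ℤ) ≤ (M : ℤ) := by
          rw [hM]
          push_cast
          have hc0 : (d : ℤ) ≤ (t 0 : ℤ) := by exact_mod_cast ht0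
          have hc1 : (d : ℤ) ≤ (t 1 : ℤ) := by exact_mod_cast ht1
          linarith
        exact_mod_cast h1
      rcases Nat.even_or_odd M with ⟨w, hw⟩ | hModd
      · refine ⟨M, Or.inl ⟨w, hES (hC w (by omega)), by omega⟩, hM⟩
      · obtain ⟨k, hk⟩ := hModd
        obtain ⟨k', hk'⟩ := hdodd
        refine ⟨M, Or.inr ⟨k - k', hC _ (by omega), by omega⟩, hM⟩
    · -- no odd entries among t 1, ..., t (n-1)
      have hall : ∀ i, 1 ≤ i → i ≤ L → ε i = false := by
        intro i h1 h2
        by_contra hc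
        exact hO ⟨i, h1, h2, by simpa using hc⟩
      have hu : ∀ i, 1 ≤ i → i ≤ L → u i ∈ S ∧ t i = 2 * u i :=
        fun i h1 h2 => hε0 i (hall i h1 h2)
      have hudec : ∀ i j, 1 ≤ i → i ≤ j → j ≤ L → u j ≤ u i := by
        intro i j h1 hij hjL
        have e1 := (hu i h1 (by omega)).2
        have e2 := (hu j (by omega) hjL).2
        have := htdec i j hij
        omega
      set s₁ : ℕ → ℕ := fun i => u (min (i + 1) L) with hs₁def
      have hs₁S : ∀ i, s₁ i ∈ S := fun i =>
        (hu (min (i + 1) L) (by omega) (by omega)).1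
      have hs₁dec : ∀ i j, i ≤ j → s₁ j ≤ s₁ i := fun i j hij =>
        hudec (min (i + 1) L) (min (j + 1) L) (by omega) (by omega) (by omega)
      have hcong : patEval (b :: r) (fun i => t (i + 1)) = 2 * patEval (b :: r) s₁ := by
        unfold patEval
        rw [Finset.mul_sum]
        refine Finset.sum_congr rfl fun i hi => ?_
        have hiL : i < L := by
          have := Finset.mem_range.mp hi
          simpa [hLdef] using this
        have h := (hu (i + 1) (by omega) (by omega)).2
        have hmin : min (i + 1) L = i + 1 := by omega
        have hs : s₁ i = u (i + 1) := by rw [hs₁def]; simp [hmin]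
        simp only [h, hs]
        push_cast
        ring
      by_cases h0f : ε 0 = false
      · -- t 0 even: pure even case, use hSp
        have h0 := hε0 0 h0f
        set s₀ : ℕ → ℕ := fun i => u (min i L) with hs₀def
        have hs₀S : ∀ i, s₀ i ∈ S := by
          intro i
          by_cases hi : i = 0
          · subst hi
            simpa [hs₀def] using h0.1
          · exact (hu (min i L) (by omega) (by omega)).1
        have hudec0 : ∀ i j, i ≤ j → j ≤ L → u j ≤ u i := by
          intro i j hij hjL
          by_cases hi : i = 0
          · subst hi
            by_cases hj : j = 0
            · subst hj
              exact le_rfl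
            · have e2 := (hu j (by omega) hjL).2
              have e0 := h0.2
              have := htdec 0 j (by omega)
              omega
          · exact hudec i j (by omega) hij hjL
        have hs₀dec : ∀ i j, i ≤ j → s₀ j ≤ s₀ i := fun i j hij =>
          hudec0 (min i L) (min j L) (by omega) (by omega)
        obtain ⟨m, hmS, hmeq⟩ := hSp s₀ hs₀S hs₀dec
        have hsucc : (fun i => s₀ (i + 1)) = s₁ := rfl
        rw [patEval_cons, hsucc] at hmeq
        have hs00 : s₀ 0 = u 0 := by rw [hs₀def]; simp
        rw [hs00] at hmeq
        refine ⟨2 * m, Or.inl ⟨m, hmS, rfl⟩, ?_⟩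
        rw [patEval_cons, hcong]
        have ht0 : ((t 0 : ℕ) : ℤ) = 2 * (u 0 : ℤ) := by exact_mod_cast h0.2
        push_cast
        push_cast at hmeq
        linarith
      · -- t 0 odd: use Hlhs
        have h0t : ε 0 = true := by
          revert h0f
          cases ε 0 <;> simp
        have h0 := hε1 0 h0t
        have HH := Hlhs s₁ hs₁S hs₁dec
        rw [hpd] at HH
        obtain ⟨f, hfE, hfeq⟩ := HH (u 0) h0.1
        refine ⟨2 * f + d, Or.inr ⟨f, hfE, rfl⟩, ?_⟩
        rw [patEval_cons, hcong]
        have ht0 : ((t 0 : ℕ) : ℤ) = 2 * (u 0 : ℤ) + d := by exact_mod_cast h0.2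
        push_cast
        push_cast at hfeq
        linarith
  · -- backward direction
    rintro ⟨d', hd'⟩ s hsS hsdec
    intro e he
    set d : ℕ := 2 * (B + d' + s 0) + 1 with hddef
    have hdS : d ∈ S := hSbig _ (by omega)
    have hdodd : Odd d := ⟨B + d' + s 0, by ring⟩
    have hAdm := hd' d hdS hdodd (by omega)
    set t : ℕ → ℕ := fun i => if i = 0 then 2 * e + d else 2 * s (i - 1) with htdef
    have htD : ∀ i, t i ∈ numDup S E d := by
      intro i
      by_cases hi : i = 0
      · exact Or.inr ⟨e, he, by simp [htdef, hi]⟩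
      · exact Or.inl ⟨s (i - 1), hsS _, by simp [htdef, hi]⟩
    have htval0 : t 0 = 2 * e + d := by simp [htdef]
    have htval : ∀ i, i ≠ 0 → t i = 2 * s (i - 1) := by
      intro i hi
      simp [htdef, hi]
    have htdec : ∀ i j, i ≤ j → t j ≤ t i := by
      intro i j hij
      by_cases hi : i = 0
      · by_cases hj : j = 0
        · rw [hi, hj]
        · have := hsdec 0 (j - 1) (by omega)
          rw [hi, htval0, htval j hj]
          omega
      · have hj : j ≠ 0 := by omega
        have := hsdec (i - 1) (j - 1) (by omega)
        rw [htval i hi, htval j hj]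
        omega
    obtain ⟨m, hmD, hmeq⟩ := hAdm t htD htdec
    have hsucc : patEval q (fun i => t (i + 1)) = 2 * patEval q s := by
      have : (fun i => t (i + 1)) = fun i => 2 * s i := by
        funext i
        simp [htdef]
      rw [this, patEval_two_mul]
    rw [patEval_cons, hsucc] at hmeq
    have ht0 : ((t 0 : ℕ) : ℤ) = 2 * (e : ℤ) + (d : ℤ) := by
      have h00 : t 0 = 2 * e + d := by simp [htdef]
      rw [h00]
      push_cast
      ring
    rw [ht0] at hmeq
    obtain ⟨k', hk'⟩ := hdodd
    rcases hmD with ⟨a', ha'S, hm2⟩ | ⟨f, hfE, hm2⟩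
    · exfalso
      rw [hm2] at hmeq
      push_cast at hmeq
      omega
    · refine ⟨f, hfE, ?_⟩
      rw [hpd]
      rw [hm2] at hmeq
      push_cast at hmeq
      push_cast
      omega
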